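/- For any instance of the Budget Optimization problem, among all uniform strategies A with spend(A) ≤ B, there is one maximizing traffic(A) that is a two-bid strategy (i.e., an optimal uniform strategy may always be taken to be supported on at most two bid vectors). -/

import Mathlib

open MeasureTheory

/-!
Budget Optimization instances.  A query landscape for query `q` has `S q + 1`
positions with click-through rates `α q 0 ≥ … ≥ α q (S q) = 0` and competing
bids `b q 0 ≥ … ≥ b q (S q) = 0`.  Keywords are `Fin nK`, queries `Fin nQ`,
and `nbrs q` is the (nonempty) set of keywords matching query `q`.
-/

noncomputable def landPos (n : ℕ) (b : Fin (n + 1) → ℝ) (x : ℝ) : Fin (n + 1) :=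
  if h : (Finset.univ.filter (fun i => b i ≤ x)).Nonempty
  then (Finset.univ.filter (fun i => b i ≤ x)).min' h
  else Fin.last n

noncomputable def landClicks (n : ℕ) (α b : Fin (n + 1) → ℝ) (x : ℝ) : ℝ :=
  α (landPos n b x)

noncomputable def landCost (n : ℕ) (α b : Fin (n + 1) → ℝ) (x : ℝ) : ℝ :=
  α (landPos n b x) * b (landPos n b x)

/-- An instance of the Budget Optimization problem. -/
structure BOInstance where
  nK : ℕ
  nQ : ℕ
  nbrs : Fin nQ → Finset (Fin nK)
  nbrs_nonempty : ∀ q, (nbrs q).Nonempty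
  S : Fin nQ → ℕ
  α : (q : Fin nQ) → Fin (S q + 1) → ℝ
  b : (q : Fin nQ) → Fin (S q + 1) → ℝ
  α_anti : ∀ q, Antitone (α q)
  b_anti : ∀ q, Antitone (b q)
  α_last : ∀ q, α q (Fin.last (S q)) = 0
  b_last : ∀ q, b q (Fin.last (S q)) = 0
  budget : ℝ
  budget_nonneg : 0 ≤ budget

/-- The effective bid on query `q` induced by the keyword-bid vector `v`. -/
noncomputable def effBid (I : BOInstance) (v : Fin I.nK → ℝ) (q : Fin I.nQ) : ℝ :=
  (I.nbrs q).sup' (I.nbrs_nonempty q) v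

noncomputable def spendVec (I : BOInstance) (v : Fin I.nK → ℝ) : ℝ :=
  ∑ q, landCost (I.S q) (I.α q) (I.b q) (effBid I v q)

noncomputable def trafficVec (I : BOInstance) (v : Fin I.nK → ℝ) : ℝ :=
  ∑ q, landClicks (I.S q) (I.α q) (I.b q) (effBid I v q)

/-- Expected spend of a distribution over keyword-bid vectors. -/
noncomputable def spendD (I : BOInstance) (μ : Measure (Fin I.nK → ℝ)) : ℝ :=
  ∫ v, spendVec I v ∂μ

/-- Expected traffic of a distribution over keyword-bid vectors. -/
noncomputable def trafficD (I : BOInstance) (μ : Measure (Fin I.nK → ℝ)) : ℝ :=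
  ∫ v, trafficVec I v ∂μ

/-- A strategy: a probability distribution over nonnegative keyword-bid vectors. -/
def IsStrategy (I : BOInstance) (μ : Measure (Fin I.nK → ℝ)) : Prop :=
  IsProbabilityMeasure μ ∧ ∀ᵐ v ∂μ, ∀ k, 0 ≤ v k

/-- A uniform strategy: supported on constant (uniform) bid vectors. -/
def IsUniform (I : BOInstance) (μ : Measure (Fin I.nK → ℝ)) : Prop :=
  IsStrategy I μ ∧ ∀ᵐ v ∂μ, ∃ x : ℝ, 0 ≤ x ∧ v = fun _ => x

/-- A two-bid strategy: a uniform strategy supported on at most two bid vectors. -/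
def IsTwoBid (I : BOInstance) (μ : Measure (Fin I.nK → ℝ)) : Prop :=
  ∃ x y l : ℝ, 0 ≤ x ∧ 0 ≤ y ∧ 0 ≤ l ∧ l ≤ 1 ∧
    μ = ENNReal.ofReal l • Measure.dirac (fun _ => x) +
        ENNReal.ofReal (1 - l) • Measure.dirac (fun _ => y)

/-- A single-bid strategy: a uniform strategy supported on at most one nonzero
bid vector together possibly with the zero vector. -/
def IsSingleBid (I : BOInstance) (μ : Measure (Fin I.nK → ℝ)) : Prop :=
  ∃ x l : ℝ, 0 ≤ x ∧ 0 ≤ l ∧ l ≤ 1 ∧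
    μ = ENNReal.ofReal l • Measure.dirac (fun _ => x) +
        ENNReal.ofReal (1 - l) • Measure.dirac (fun _ => (0 : ℝ))

/-!
A uniform strategy matters only through the *profile* its bid induces — the slot that each
query's landscape assigns to the common bid — and only finitely many profiles arise. Spend and
traffic of a uniform strategy are therefore those of a probability vector `w` on this finite set,
and the best uniform strategy solves a linear program over the simplex with a single budget
constraint. Its optimum is attained by compactness, and any feasible `w` with three or more
nonzero entries can be moved along a direction in the kernel of `w ↦ (∑ w, spend w)`, oriented
so that traffic does not decrease, until an entry vanishes (the Carathéodory step). So some
optimum has at most two atoms, i.e. is a two-bid strategy.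
-/

open scoped Finset

section TwoPointReduction

variable {ι : Type*} [Fintype ι]

lemma exists_affine_relation (T : Finset ι) (hT : 2 < #T) (s : ι → ℝ) :
    ∃ d : ι → ℝ, (∀ i ∉ T, d i = 0) ∧ ∑ i, d i = 0 ∧ ∑ i, d i * s i = 0 ∧
      d ≠ 0 := by
  classical
  have hdep : ¬LinearIndepOn ℝ (fun i => ((1 : ℝ), s i)) (T : Set ι) := fun h => by
    have := h.fintype_card_le_finrank
    simp only [Finset.coe_sort_coe, Fintype.card_coe, Module.finrank_prod,
      Module.finrank_self] at this
    omega
  obtain ⟨f, hf, i, hi, hfi⟩ := not_linearIndepOn_finset_iff.mp hdep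
  have hf := Prod.ext_iff.mp hf
  simp only [Prod.fst_sum, Prod.snd_sum, Prod.smul_mk, smul_eq_mul, mul_one] at hf
  refine ⟨fun i => if i ∈ T then f i else 0, fun i hi => if_neg hi, ?_, ?_,
    fun h => hfi (by simpa [hi] using congrFun h i)⟩
  · simpa [Finset.sum_ite_mem] using hf.1
  · simpa [ite_mul, Finset.sum_ite_mem] using hf.2

lemma exists_neg_of_sum_eq_zero {d : ι → ℝ} (hsum : ∑ i, d i = 0) (hd : d ≠ 0) :
    ∃ i, d i < 0 := by
  by_contra! hnonneg
  exact hd (funext fun i =>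
    (Finset.sum_eq_zero_iff_of_nonneg fun i _ => hnonneg i).mp hsum i (Finset.mem_univ i))

lemma exists_step_mem_stdSimplex {w d : ι → ℝ} (hw : w ∈ stdSimplex ℝ ι)
    (hd : ∀ i, w i = 0 → d i = 0) (hsum : ∑ i, d i = 0) (hneg : ∃ i, d i < 0) :
    ∃ θ : ℝ, 0 ≤ θ ∧ w + θ • d ∈ stdSimplex ℝ ι ∧
      #{i | (w + θ • d) i ≠ 0} < #{i | w i ≠ 0} := by
  classical
  obtain ⟨i₀, hi₀, hmin⟩ := Finset.exists_min_image ({i | d i < 0} : Finset ι)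
    (fun i => w i / -d i) (by simpa [Finset.Nonempty] using hneg)
  have hdi₀ : d i₀ < 0 := by simpa using hi₀
  set θ := w i₀ / -d i₀
  have hθ : 0 ≤ θ := div_nonneg (hw.1 i₀) (by linarith)
  have hzero : w i₀ + θ * d i₀ = 0 := by
    have h : θ * -d i₀ = w i₀ := div_mul_cancel₀ (w i₀) (neg_ne_zero.mpr hdi₀.ne)
    linarith
  refine ⟨θ, hθ, ⟨fun i => ?_, ?_⟩, Finset.card_lt_card ?_⟩
  · rcases le_or_gt 0 (d i) with hdi | hdi
    · simpa using add_nonneg (hw.1 i) (mul_nonneg hθ hdi)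
    · have := (le_div_iff₀ (neg_pos.mpr hdi)).mp (hmin i (by simpa using hdi))
      simp only [Pi.add_apply, Pi.smul_apply, smul_eq_mul]
      linarith
  · simp [Finset.sum_add_distrib, ← Finset.mul_sum, hsum, hw.2]
  · refine Finset.ssubset_iff_of_subset (fun i => ?_) |>.mpr ⟨i₀, ?_, ?_⟩
    · simp only [Finset.mem_filter, Finset.mem_univ, true_and, Pi.add_apply, Pi.smul_apply,
        smul_eq_mul]
      intro h hwi
      simp [hwi, hd i hwi] at h
    · simpa using fun h => hdi₀.ne (hd i₀ h)
    · simpa using hzero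

lemma exists_mem_stdSimplex_card_support_le_two (s t : ι → ℝ) {w : ι → ℝ}
    (hw : w ∈ stdSimplex ℝ ι) :
    ∃ w' ∈ stdSimplex ℝ ι, #{i | w' i ≠ 0} ≤ 2 ∧
      ∑ i, w' i * s i = ∑ i, w i * s i ∧ ∑ i, w i * t i ≤ ∑ i, w' i * t i := by
  classical
  induction hn : #{i | w i ≠ 0} using Nat.strong_induction_on generalizing w with
  | _ n ih =>
  by_cases h2 : n ≤ 2
  · exact ⟨w, hw, hn ▸ h2, rfl, le_rfl⟩
  obtain ⟨d, hdT, hd1, hds, hd0⟩ := exists_affine_relation {i | w i ≠ 0} (by omega) s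
  wlog hdt : 0 ≤ ∑ i, d i * t i generalizing d
  · refine this (-d) (fun i hi => by simp [hdT i hi]) (by simpa using hd1) (by simpa using hds)
      (neg_ne_zero.mpr hd0) ?_
    simp only [Pi.neg_apply, neg_mul, Finset.sum_neg_distrib]
    linarith
  obtain ⟨θ, hθ, hw', hcard⟩ := exists_step_mem_stdSimplex hw
    (fun i hi => hdT i (by simpa using hi)) hd1 (exists_neg_of_sum_eq_zero hd1 hd0)
  obtain ⟨w'', hw'', h2, hs, ht⟩ := ih _ (hn ▸ hcard) hw' rfl
  have hsum (f : ι → ℝ) :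
      ∑ i, (w + θ • d) i * f i = ∑ i, w i * f i + θ * ∑ i, d i * f i := by
    simp only [Pi.add_apply, Pi.smul_apply, smul_eq_mul, add_mul, Finset.sum_add_distrib,
      Finset.mul_sum, mul_assoc]
  refine ⟨w'', hw'', h2, by rw [hs, hsum, hds, mul_zero, add_zero], ?_⟩
  rw [hsum] at ht
  nlinarith [mul_nonneg hθ hdt]

lemma exists_sum_mul_eq_of_card_support_le_two {w : ι → ℝ} (hw : w ∈ stdSimplex ℝ ι)
    (h2 : #{i | w i ≠ 0} ≤ 2) :
    ∃ x y, ∀ f : ι → ℝ, ∑ i, w i * f i = w x * f x + (1 - w x) * f y := by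
  classical
  set S : Finset ι := {i | w i ≠ 0}
  have hsupp (f : ι → ℝ) : ∑ i, w i * f i = ∑ i ∈ S, w i * f i :=
    (Finset.sum_filter_of_ne fun i _ h => left_ne_zero_of_mul h).symm
  have hone : ∑ i ∈ S, w i = 1 := by simpa using (hsupp 1).symm.trans (by simpa using hw.2)
  have hS : S.Nonempty := Finset.nonempty_of_sum_ne_zero (by rw [hone]; exact one_ne_zero)
  rcases Nat.le_succ_iff.mp h2 with h1 | h2
  · obtain ⟨x, hx⟩ := Finset.card_eq_one.mp (le_antisymm h1 hS.card_pos)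
    rw [hx, Finset.sum_singleton] at hone
    exact ⟨x, x, fun f => by rw [hsupp, hx, Finset.sum_singleton, hone]; ring⟩
  · obtain ⟨x, y, hxy, hx⟩ := Finset.card_eq_two.mp h2
    rw [hx, Finset.sum_pair hxy] at hone
    exact ⟨x, y, fun f => by rw [hsupp, hx, Finset.sum_pair hxy, ← hone]; ring⟩

lemma exists_twoPoint_forall_le (s t : ι → ℝ) {B : ℝ} (hB : ∃ i, s i ≤ B) :
    ∃ x y, ∃ l ∈ Set.Icc (0 : ℝ) 1, l * s x + (1 - l) * s y ≤ B ∧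
      ∀ w ∈ stdSimplex ℝ ι, ∑ i, w i * s i ≤ B →
        ∑ i, w i * t i ≤ l * t x + (1 - l) * t y := by
  classical
  obtain ⟨i, hi⟩ := hB
  have hW : IsCompact (stdSimplex ℝ ι ∩ {w | ∑ i, w i * s i ≤ B}) :=
    (isCompact_stdSimplex ℝ ι).inter_right (isClosed_le (by fun_prop) continuous_const)
  obtain ⟨w, ⟨hw, hwB⟩, hmax⟩ := hW.exists_isMaxOn (f := fun w => ∑ i, w i * t i)
    ⟨Pi.single i 1, single_mem_stdSimplex ℝ i, by simpa [Pi.single_apply] using hi⟩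
    (by fun_prop)
  obtain ⟨w', hw', h2, hs, ht⟩ := exists_mem_stdSimplex_card_support_le_two s t hw
  obtain ⟨x, y, hxy⟩ := exists_sum_mul_eq_of_card_support_le_two hw' h2
  refine ⟨x, y, w' x, mem_Icc_of_mem_stdSimplex hw' x, by rw [← hxy, hs]; exact hwB,
    fun v hv hvB => ?_⟩
  rw [← hxy]
  exact (hmax ⟨hv, hvB⟩).trans ht

end TwoPointReduction

section TwoPointMeasure

variable {X : Type*} [MeasurableSpace X] {l : ℝ}

noncomputable def twoPointMeasure (l : ℝ) (a b : X) : Measure X :=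
  ENNReal.ofReal l • Measure.dirac a + ENNReal.ofReal (1 - l) • Measure.dirac b

lemma isProbabilityMeasure_twoPointMeasure (hl : l ∈ Set.Icc (0 : ℝ) 1) (a b : X) :
    IsProbabilityMeasure (twoPointMeasure l a b) := by
  constructor
  simp only [twoPointMeasure, Measure.coe_add, Measure.coe_smul, Pi.add_apply, Pi.smul_apply,
    measure_univ, smul_eq_mul, mul_one]
  rw [← ENNReal.ofReal_add hl.1 (by linarith [hl.2]), add_sub_cancel, ENNReal.ofReal_one]

lemma ae_twoPointMeasure [MeasurableSingletonClass X] {P : X → Prop} {a b : X} (ha : P a)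
    (hb : P b) :
    ∀ᵐ v ∂twoPointMeasure l a b, P v := by
  rw [twoPointMeasure, ae_add_measure_iff]
  exact ⟨Measure.ae_smul_measure (ae_dirac_eq a ▸ ha) _,
    Measure.ae_smul_measure (ae_dirac_eq b ▸ hb) _⟩

lemma integral_twoPointMeasure [MeasurableSingletonClass X] (hl : l ∈ Set.Icc (0 : ℝ) 1)
    (f : X → ℝ) (a b : X) :
    ∫ v, f v ∂twoPointMeasure l a b = l * f a + (1 - l) * f b := by
  have hint (c : X) : Integrable f (Measure.dirac c) := integrable_dirac enorm_lt_top
  rw [twoPointMeasure, integral_add_measure ((hint a).smul_measure ENNReal.ofReal_ne_top)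
      ((hint b).smul_measure ENNReal.ofReal_ne_top),
    integral_smul_measure, integral_smul_measure, integral_dirac, integral_dirac,
    ENNReal.toReal_ofReal hl.1, ENNReal.toReal_ofReal (by linarith [hl.2]), smul_eq_mul,
    smul_eq_mul]

lemma integral_comp_eq_sum_of_ae_mem {Γ : Type*} [Fintype Γ] [MeasurableSpace Γ]
    [MeasurableSingletonClass Γ] {μ : Measure X} [IsFiniteMeasure μ] {Φ : X → Γ}
    (hΦ : Measurable Φ) {A : Finset Γ} (hA : ∀ᵐ v ∂μ, Φ v ∈ A) (c : Γ → ℝ) :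
    ∫ v, c (Φ v) ∂μ = ∑ γ : A, μ.real (Φ ⁻¹' {γ.1}) * c γ := by
  rw [Finset.sum_coe_sort A fun γ => μ.real (Φ ⁻¹' {γ}) * c γ,
    ← integral_map hΦ.aemeasurable StronglyMeasurable.of_discrete.aestronglyMeasurable,
    integral_fintype Integrable.of_finite]
  refine (Finset.sum_subset (Finset.subset_univ A) fun γ _ hγ => ?_).symm.trans
    (Finset.sum_congr rfl fun γ _ => ?_)
  · have : μ (Φ ⁻¹' {γ}) = 0 :=
      measure_mono_null (fun v hv => by simp_all) (ae_iff.mp hA)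
    rw [map_measureReal_apply hΦ (measurableSet_singleton γ), measureReal_def, this,
      ENNReal.toReal_zero, zero_smul]
  · rw [map_measureReal_apply hΦ (measurableSet_singleton γ), smul_eq_mul]

end TwoPointMeasure

section Landscape

variable {n : ℕ} {b : Fin (n + 1) → ℝ}

lemma landPos_antitone : Antitone (landPos n b) := by
  intro x y hxy
  unfold landPos
  by_cases hx : (Finset.univ.filter fun i => b i ≤ x).Nonempty
  · have hsub :
        (Finset.univ.filter fun i => b i ≤ x) ⊆ Finset.univ.filter fun i => b i ≤ y :=
      fun i => by simpa using fun hi => hi.trans hxy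
    rw [dif_pos hx, dif_pos (hx.mono hsub)]
    exact Finset.min'_subset hx hsub
  · rw [dif_neg hx]
    exact Fin.le_last _

lemma measurable_landPos : Measurable (landPos n b) :=
  measurable_to_countable' fun _ =>
    (Set.ordConnected_def.mpr fun _ hx _ hy _ hz =>
      le_antisymm (hx ▸ landPos_antitone hz.1) (hy ▸ landPos_antitone hz.2)).measurableSet

lemma landCost_zero (α : Fin (n + 1) → ℝ) (hb : Antitone b) (hlast : b (Fin.last n) = 0) :
    landCost n α b 0 = 0 := by
  have hne : (Finset.univ.filter fun i => b i ≤ 0).Nonempty := ⟨Fin.last n, by simp [hlast]⟩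
  have hle : b (landPos n b 0) ≤ 0 := by
    rw [landPos, dif_pos hne]
    exact (Finset.mem_filter.mp (Finset.min'_mem _ hne)).2
  have hge : 0 ≤ b (landPos n b 0) := hlast ▸ hb (Fin.le_last _)
  rw [landCost, le_antisymm hle hge, mul_zero]

end Landscape

namespace BOInstance

variable (I : BOInstance)

abbrev Profile : Type := ∀ q : Fin I.nQ, Fin (I.S q + 1)

noncomputable def profile (v : Fin I.nK → ℝ) : I.Profile :=
  fun q => landPos (I.S q) (I.b q) (effBid I v q)

def profileSpend (γ : I.Profile) : ℝ := ∑ q, I.α q (γ q) * I.b q (γ q)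

def profileTraffic (γ : I.Profile) : ℝ := ∑ q, I.α q (γ q)

lemma measurable_effBid (q : Fin I.nQ) : Measurable fun v : Fin I.nK → ℝ => effBid I v q := by
  have : (fun v : Fin I.nK → ℝ => effBid I v q) =
      (I.nbrs q).sup' (I.nbrs_nonempty q) fun k v => v k := by
    ext v
    simp [effBid, Finset.sup'_apply]
  rw [this]
  exact Finset.measurable_sup' _ fun k _ => measurable_pi_apply k

lemma measurable_profile : Measurable I.profile :=
  measurable_pi_lambda _ fun q => measurable_landPos.comp (I.measurable_effBid q)

lemma profileSpend_profile_zero : I.profileSpend (I.profile fun _ => 0) = 0 :=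
  Finset.sum_eq_zero fun q _ => by
    change landCost _ (I.α q) (I.b q) (effBid I (fun _ => 0) q) = 0
    rw [effBid, Finset.sup'_const]
    exact landCost_zero _ (I.b_anti q) (I.b_last q)

noncomputable def uniformProfiles : Finset I.Profile :=
  (Set.toFinite {γ | ∃ x, 0 ≤ x ∧ I.profile (fun _ => x) = γ}).toFinset

lemma mem_uniformProfiles {γ : I.Profile} :
    γ ∈ I.uniformProfiles ↔ ∃ x, 0 ≤ x ∧ I.profile (fun _ => x) = γ :=
  Set.Finite.mem_toFinset _

lemma exists_weights_of_isUniform {μ : Measure (Fin I.nK → ℝ)} (hμ : IsUniform I μ) :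
    ∃ w ∈ stdSimplex ℝ I.uniformProfiles,
      spendD I μ = ∑ γ, w γ * I.profileSpend γ ∧
        trafficD I μ = ∑ γ, w γ * I.profileTraffic γ := by
  obtain ⟨⟨hprob, -⟩, hunif⟩ := hμ
  have hsum := integral_comp_eq_sum_of_ae_mem I.measurable_profile
    (hunif.mono fun v ⟨x, hx, hv⟩ => I.mem_uniformProfiles.mpr ⟨x, hx, hv ▸ rfl⟩)
  refine ⟨fun γ => μ.real (I.profile ⁻¹' {γ.1}), ⟨fun γ => measureReal_nonneg, ?_⟩,
    hsum I.profileSpend, hsum I.profileTraffic⟩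
  simpa using (hsum 1).symm

lemma isUniform_twoPointMeasure {x y l : ℝ} (hx : 0 ≤ x) (hy : 0 ≤ y)
    (hl : l ∈ Set.Icc (0 : ℝ) 1) :
    IsUniform I (twoPointMeasure l (fun _ => x) (fun _ => y)) :=
  ⟨⟨isProbabilityMeasure_twoPointMeasure hl _ _,
      ae_twoPointMeasure (fun _ => hx) (fun _ => hy)⟩,
    ae_twoPointMeasure ⟨x, hx, rfl⟩ ⟨y, hy, rfl⟩⟩

end BOInstance

/-- Among all uniform strategies respecting the budget, there is one maximizing
traffic which is a two-bid strategy. -/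
theorem best_uniform_is_two_bid (I : BOInstance) :
    ∃ μ : Measure (Fin I.nK → ℝ),
      IsUniform I μ ∧ IsTwoBid I μ ∧ spendD I μ ≤ I.budget ∧
      ∀ μ' : Measure (Fin I.nK → ℝ),
        IsUniform I μ' → spendD I μ' ≤ I.budget → trafficD I μ' ≤ trafficD I μ := by
  obtain ⟨⟨γ₁, hγ₁⟩, ⟨γ₂, hγ₂⟩, l, hl, hlB, hopt⟩ :=
    exists_twoPoint_forall_le (fun γ : I.uniformProfiles => I.profileSpend γ)
      (fun γ => I.profileTraffic γ) (B := I.budget)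
      ⟨⟨_, I.mem_uniformProfiles.mpr ⟨0, le_rfl, rfl⟩⟩,
        I.profileSpend_profile_zero.le.trans I.budget_nonneg⟩
  obtain ⟨x, hx, rfl⟩ := I.mem_uniformProfiles.mp hγ₁
  obtain ⟨y, hy, rfl⟩ := I.mem_uniformProfiles.mp hγ₂
  have hint (f : (Fin I.nK → ℝ) → ℝ) :=
    integral_twoPointMeasure hl f (fun _ => x) (fun _ => y)
  refine ⟨_, I.isUniform_twoPointMeasure hx hy hl, ⟨x, y, l, hx, hy, hl.1, hl.2, rfl⟩, ?_,
    fun μ' hμ' hB => ?_⟩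
  · rwa [spendD, hint]
  · obtain ⟨w, hw, hspend, htraffic⟩ := I.exists_weights_of_isUniform hμ'
    rw [htraffic, trafficD, hint]
    exact hopt w hw (hspend ▸ hB)
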